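/- arXiv:2601.13152 — 3 statements merged into one kernel-verified Lean document; each statement's English description precedes it below -/
import Mathlib

section
/- For every natural number n ≥ 1, the product ∏_{i=1}^n (4i + 3) is not a perfect square. -/
/-- A partition as a weakly decreasing list of positive naturals. -/
def IsPartition (l : List ℕ) : Prop :=
  l.Pairwise (· ≥ ·) ∧ ∀ x ∈ l, 0 < x

/-- Membership of the (1-based) cell `(i, j)` in the Young diagram of `l`. -/
def cellMem (l : List ℕ) (i j : ℕ) : Prop :=
  1 ≤ i ∧ i ≤ l.length ∧ 1 ≤ j ∧ j ≤ l.getD (i - 1) 0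

/-- The `j`-th part of the conjugate partition: `λ'_j = |{i : λ_i ≥ j}|`. -/
def conjPart (l : List ℕ) (j : ℕ) : ℕ :=
  (l.filter (fun a => j ≤ a)).length

/-- The conjugate partition as a list. -/
def conjList (l : List ℕ) : List ℕ :=
  (List.range (l.headD 0)).map (fun i => conjPart l (i + 1))

/-- Hook length `h_{i,j}(λ) = (λ_i - j) + (λ'_j - i) + 1` (1-based coordinates). -/
def hookLength (l : List ℕ) (i j : ℕ) : ℕ :=
  (l.getD (i - 1) 0 - j) + (conjPart l j - i) + 1

/-- `λ` has a hook of size `h`. -/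
def HasHook (l : List ℕ) (h : ℕ) : Prop :=
  ∃ i j, cellMem l i j ∧ hookLength l i j = h

/-- The hook `H_{i,j}(λ)` as a set of cells. -/
def hookSet (l : List ℕ) (i j : ℕ) : Set (ℕ × ℕ) :=
  {q | (q.1 = i ∧ cellMem l i q.2 ∧ j ≤ q.2) ∨ (q.2 = j ∧ cellMem l q.1 j ∧ i ≤ q.1)}

/-- The rim hook `R_{i,j}(λ)` as a set of cells. -/
def rimSet (l : List ℕ) (i j : ℕ) : Set (ℕ × ℕ) :=
  {q | ∃ x y t : ℕ, (x, y) ∈ hookSet l i j ∧ cellMem l (x + t) (y + t) ∧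
      ¬ cellMem l (x + t + 1) (y + t + 1) ∧ q = (x + t, y + t)}

/-- `l'` is obtained from `l` by removing a rim hook of size `e`. -/
def RemovesHook (e : ℕ) (l l' : List ℕ) : Prop :=
  IsPartition l' ∧ ∃ i j, cellMem l i j ∧ hookLength l i j = e ∧
    ∀ a b, cellMem l' a b ↔ (cellMem l a b ∧ (a, b) ∉ rimSet l i j)

/-- `m` is the `e`-core of `l`: obtained by repeatedly removing `e`-hooks until none remain. -/
def IsECore (e : ℕ) (l m : List ℕ) : Prop :=
  IsPartition m ∧ Relation.ReflTransGen (RemovesHook e) l m ∧ ¬ HasHook m e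

/-- The staircase partition `γ_c = (c, c-1, ..., 1)`. -/
def staircase (c : ℕ) : List ℕ := (List.range c).reverse.map (· + 1)

/-- The sequence `(x_1 - (t-1), x_2 - (t-2), ..., x_t)` associated to a β-set `X`,
with `x_1 > x_2 > ... > x_t` the elements of `X` in decreasing order. -/
def betaList (X : Finset ℕ) : List ℕ :=
  ((X.sort (· ≤ ·)).reverse).mapIdx (fun k x => x - (X.card - 1 - k))

/-- The partition `P(X)` associated to a β-set `X` (dropping the zero parts). -/
def betaPartition (X : Finset ℕ) : List ℕ := (betaList X).filter (fun a => a ≠ 0)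

/-!
A prime `p ≥ 5` with `3 * p ≤ 4 * n + 3 < 5 * p` divides exactly one factor `4 * i + 3`, namely
whichever of `p` and `3 * p` is `3` mod `4`, and divides it exactly once; so the product has
`p`-adic valuation `1`. For `n < 8` the prime `7` does the same job.

Such a prime exists for `N = 4 * n + 3 ≥ 21`: for small `N` by a chain of explicit primes, and
for large `N` because `(4 * s, 6 * s]` contains a prime once `s ≥ 2 ^ 18`. The latter is Erdős's
argument for Bertrand's postulate, run on `C(6s, 2s)`: without such a prime, its prime factors
above `6s/5` divide `C(3s, s)`, so `C(6s, 2s) ≤ (6s)^(√(6s) + 1) 4^(6s/5) C(3s, s)`, which is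
incompatible with `C(6s, 2s) ≥ 729^s / ((6s + 1) 16^s)` and `C(3s, s) ≤ 27^s / 4^s`.
-/

open Finset
open scoped Nat

namespace Nat

theorem factorization_prod_eq_of_unique_dvd {ι : Type*} {s : Finset ι} {f : ι → ℕ} {p : ℕ}
    {i₀ : ι} (hf : ∀ i ∈ s, f i ≠ 0) (hi₀ : i₀ ∈ s) (huniq : ∀ i ∈ s, p ∣ f i → i = i₀) :
    (∏ i ∈ s, f i).factorization p = (f i₀).factorization p := by
  rw [factorization_prod hf, Finsupp.finsetSum_apply]
  refine sum_eq_single_of_mem i₀ hi₀ fun i hi hne => ?_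
  exact factorization_eq_zero_of_not_dvd fun hdvd => hne (huniq i hi hdvd)

theorem factorization_factorial_eq_div {p n : ℕ} (hp : p.Prime) (hn : n < p ^ 2) :
    (n !).factorization p = n / p := by
  rcases eq_or_ne n 0 with rfl | hn0
  · simp
  rw [factorization_factorial hp (log_lt_of_lt_pow hn0 hn)]
  simp

theorem factorization_choose_add_div_add_div {p n k : ℕ} (hp : p.Prime) (hkn : k ≤ n)
    (hn : n < p ^ 2) : (n.choose k).factorization p + k / p + (n - k) / p = n / p := by
  have h := congrArg (·.factorization p) (choose_mul_factorial_mul_factorial hkn)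
  simp only [factorization_mul (mul_ne_zero (choose_ne_zero hkn) (factorial_ne_zero _))
    (factorial_ne_zero _), factorization_mul (choose_ne_zero hkn) (factorial_ne_zero _),
    Finsupp.coe_add, Pi.add_apply] at h
  rwa [factorization_factorial_eq_div hp hn, factorization_factorial_eq_div hp (by omega),
    factorization_factorial_eq_div hp (by omega)] at h

theorem prod_pow_factorization_le {n : ℕ} (hn : n ≠ 0) (S : Finset ℕ) :
    ∏ p ∈ S, p ^ n.factorization p ≤ n := by
  calc ∏ p ∈ S, p ^ n.factorization p = ∏ p ∈ S ∩ n.primeFactors, p ^ n.factorization p := by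
        refine (prod_subset inter_subset_left fun p hpS hp => ?_).symm
        have hp' : p ∉ n.factorization.support := fun h => hp (mem_inter.mpr ⟨hpS, h⟩)
        rw [Finsupp.notMem_support_iff.mp hp', pow_zero]
    _ ≤ ∏ p ∈ n.primeFactors, p ^ n.factorization p :=
        prod_le_prod_of_subset_of_one_le' inter_subset_right fun p hp _ =>
          one_le_pow₀ (Nat.Prime.one_lt (prime_of_mem_primeFactors hp)).le
    _ = n := prod_factorization_pow_eq_self hn

theorem choose_mul_two_pow_le_choose_two_mul_mul_two_pow (n k : ℕ) :
    (3 * n).choose k * 2 ^ k ≤ (3 * n).choose (2 * n) * 2 ^ (2 * n) := by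
  set f : ℕ → ℕ := fun j => (3 * n).choose j * 2 ^ j
  have hstep (j : ℕ) : f (j + 1) * (j + 1) = f j * (2 * (3 * n - j)) := by
    simp only [f, pow_succ]
    rw [mul_right_comm, choose_succ_right_eq]
    ring
  have hmono : MonotoneOn f (Set.Iic (2 * n)) :=
    monotoneOn_of_le_add_one Set.ordConnected_Iic fun j _ _ hj =>
      Nat.le_of_mul_le_mul_right (c := j + 1)
        (by rw [hstep]; gcongr; simp only [Set.mem_Iic] at hj; omega) j.succ_pos
  have hanti : AntitoneOn f (Set.Ici (2 * n)) :=
    antitoneOn_of_add_one_le Set.ordConnected_Ici fun j _ hj _ =>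
      Nat.le_of_mul_le_mul_right (c := j + 1)
        (by rw [hstep]; gcongr; simp only [Set.mem_Ici] at hj; omega) j.succ_pos
  rcases le_total k (2 * n) with hk | hk
  · exact hmono hk Set.self_mem_Iic hk
  · exact hanti Set.self_mem_Ici hk hk

theorem three_pow_eq_sum_choose_mul_two_pow (m : ℕ) :
    3 ^ m = ∑ k ∈ range (m + 1), m.choose k * 2 ^ k := by
  rw [show 3 = 2 + 1 by rfl, add_pow]
  simp [mul_comm]

theorem three_pow_le_succ_mul_choose_mul_two_pow (n : ℕ) :
    3 ^ (3 * n) ≤ (3 * n + 1) * ((3 * n).choose (2 * n) * 2 ^ (2 * n)) := by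
  rw [three_pow_eq_sum_choose_mul_two_pow]
  exact (sum_le_card_nsmul _ _ _ fun k _ =>
    choose_mul_two_pow_le_choose_two_mul_mul_two_pow n k).trans_eq (by simp)

theorem choose_mul_two_pow_le_three_pow (n : ℕ) :
    (3 * n).choose n * 2 ^ (2 * n) ≤ 3 ^ (3 * n) := by
  rw [three_pow_eq_sum_choose_mul_two_pow, choose_symm_of_eq_add (show 3 * n = n + 2 * n by ring)]
  exact single_le_sum (f := fun k => (3 * n).choose k * 2 ^ k) (fun _ _ => zero_le _)
    (mem_range.mpr (by omega))

end Nat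

theorem factorization_choose_six_mul_le_factorization_choose_three_mul {s p : ℕ} (hp : p.Prime)
    (hsp : s < p) (hp4 : p ≤ 4 * s) (hsq : 6 * s < p ^ 2) :
    ((6 * s).choose (2 * s)).factorization p ≤ ((3 * s).choose s).factorization p := by
  have hB := Nat.factorization_choose_add_div_add_div hp (by omega : 2 * s ≤ 6 * s) hsq
  have hC := Nat.factorization_choose_add_div_add_div hp (by omega : s ≤ 3 * s) (by omega)
  -- Every `k * s / p` with `k ∣ 12` is determined by `t = 12 * s / p`, and `3 ≤ t < 12`.
  set t := 12 * s / p with ht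
  have hdiv (k m : ℕ) (hkm : k * m = 12) : k * s / p = t / m := by
    have hm : 0 < m := Nat.pos_of_ne_zero (by rintro rfl; simp at hkm)
    rw [ht, Nat.div_div_eq_div_mul, ← hkm, mul_right_comm, Nat.mul_div_mul_right _ _ hm]
  have ht3 : 3 ≤ t := (Nat.le_div_iff_mul_le hp.pos).mpr (by omega)
  have ht12 : t < 12 := (Nat.div_lt_iff_lt_mul hp.pos).mpr (by nlinarith)
  rw [show 6 * s - 2 * s = 4 * s by omega, hdiv 6 2 rfl, hdiv 2 6 rfl, hdiv 4 3 rfl] at hB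
  rw [show 3 * s - s = 2 * s by omega, hdiv 3 4 rfl, hdiv 2 6 rfl,
    show s / p = t / 12 by rw [← hdiv 1 12 rfl, one_mul]] at hC
  omega

theorem choose_six_mul_le_of_no_prime_between {s : ℕ} (hs : 0 < s)
    (hnp : ∀ p, p.Prime → 4 * s < p → 6 * s < p) :
    (6 * s).choose (2 * s)
      ≤ (6 * s) ^ (Nat.sqrt (6 * s) + 1) * 4 ^ (6 * s / 5) * (3 * s).choose s := by
  set n := 6 * s
  set r := Nat.sqrt n
  set f : ℕ → ℕ := fun p => p ^ (n.choose (2 * s)).factorization p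
  set S := {p ∈ range (n + 1) | p.Prime}
  have hS : n.choose (2 * s) = ∏ p ∈ S, f p := by
    refine (Nat.prod_pow_factorization_choose n _ (by omega)).symm.trans
      (prod_filter_of_ne fun p _ hf => ?_).symm
    contrapose! hf
    simp [Nat.factorization_eq_zero_of_not_prime _ hf]
  have hsmall : ∏ p ∈ S with p ≤ r, f p ≤ n ^ (r + 1) := by
    refine (prod_le_pow_card _ _ _ fun p _ => Nat.pow_factorization_choose_le (by omega)).trans
      (Nat.pow_le_pow_right (by omega) ?_)
    refine (card_le_card fun p hp => ?_).trans (card_range (r + 1)).le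
    simp only [mem_filter, mem_range] at hp ⊢
    omega
  have hmiddle : ∏ p ∈ {p ∈ S | ¬p ≤ r} with 5 * p ≤ n, f p ≤ 4 ^ (n / 5) := by
    refine le_trans ?_ (primorial_le_four_pow (n / 5))
    refine (prod_le_prod' fun p hp => (?_ : f p ≤ p)).trans
      (prod_le_prod_of_subset_of_one_le' (fun p hp => ?_) fun p hp _ => ?_)
    · simp only [S, mem_filter, mem_range] at hp
      exact (Nat.pow_le_pow_right hp.1.1.2.pos
        (Nat.factorization_choose_le_one (Nat.sqrt_lt'.mp (by omega)))).trans_eq (pow_one p)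
    · simp only [S, mem_filter, mem_range] at hp ⊢
      exact ⟨by omega, hp.1.1.2⟩
    · exact (mem_filter.mp hp).2.one_lt.le
  have hlarge : ∏ p ∈ {p ∈ S | ¬p ≤ r} with ¬5 * p ≤ n, f p ≤ (3 * s).choose s := by
    refine (prod_le_prod' fun p hp => ?_).trans
      (Nat.prod_pow_factorization_le (Nat.choose_ne_zero (by omega)) _)
    simp only [S, mem_filter, mem_range] at hp
    have hp4 : p ≤ 4 * s := not_lt.mp fun h => by have := hnp p hp.1.1.2 h; omega
    exact Nat.pow_le_pow_right hp.1.1.2.pos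
      (factorization_choose_six_mul_le_factorization_choose_three_mul hp.1.1.2 (by omega) hp4
        (Nat.sqrt_lt'.mp (by omega : r < p)))
  calc n.choose (2 * s)
      = (∏ p ∈ S with p ≤ r, f p) * ((∏ p ∈ {p ∈ S | ¬p ≤ r} with 5 * p ≤ n, f p) *
          ∏ p ∈ {p ∈ S | ¬p ≤ r} with ¬5 * p ≤ n, f p) := by
        rw [prod_filter_mul_prod_filter_not, prod_filter_mul_prod_filter_not, hS]
    _ ≤ n ^ (r + 1) * (4 ^ (n / 5) * (3 * s).choose s) := by gcongr
    _ = _ := by ring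

theorem mul_two_pow_half_lt_two_pow_div_five {j : ℕ} (hj : 18 ≤ j) :
    (j + 4) * (2 ^ ((j + 5) / 2) + 2) < 2 ^ j / 5 := by
  induction j using Nat.strong_induction_on with
  | _ j ih =>
    rcases lt_or_ge j 20 with hj20 | hj20
    · interval_cases j <;> norm_num
    · obtain ⟨k, rfl⟩ : ∃ k, j = k + 2 := ⟨j - 2, by omega⟩
      have ihk := ih k (by omega) (by omega)
      rw [show (k + 2 + 5) / 2 = (k + 5) / 2 + 1 by omega, pow_succ, pow_add]
      have h4 : 4 * (2 ^ k / 5) ≤ 2 ^ k * 2 ^ 2 / 5 := by omega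
      nlinarith [Nat.zero_le (k * 2 ^ ((k + 5) / 2))]

theorem succ_mul_pow_sqrt_lt_two_pow {s : ℕ} (hs : 2 ^ 18 ≤ s) :
    (6 * s + 1) * (6 * s) ^ (Nat.sqrt (6 * s) + 1) < 2 ^ (s / 5) := by
  set j := Nat.log 2 s
  set e := (j + 5) / 2
  have hj : 18 ≤ j := Nat.le_log_of_pow_le (by norm_num) hs
  have hjs : 2 ^ j ≤ s := Nat.pow_log_le_self 2 (by positivity)
  have h6s : 6 * s < 2 ^ (j + 4) := by
    have : s < 2 ^ (j + 1) := Nat.lt_pow_succ_log_self (by norm_num) s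
    rw [pow_succ] at this
    rw [pow_add]
    omega
  have hr : Nat.sqrt (6 * s) ≤ 2 ^ e := by
    refine Nat.le_of_lt_succ (Nat.sqrt_lt'.mpr (h6s.trans_le ?_))
    calc 2 ^ (j + 4) ≤ 2 ^ (2 * e) := Nat.pow_le_pow_right (by norm_num) (by omega)
      _ ≤ (2 ^ e + 1) ^ 2 := by rw [pow_mul']; gcongr; omega
  calc (6 * s + 1) * (6 * s) ^ (Nat.sqrt (6 * s) + 1)
      ≤ 2 ^ (j + 4) * (2 ^ (j + 4)) ^ (2 ^ e + 1) := by
        gcongr <;> omega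
    _ = 2 ^ ((j + 4) * (2 ^ e + 2)) := by rw [← pow_mul, ← pow_add]; ring_nf
    _ < 2 ^ (s / 5) := Nat.pow_lt_pow_right (by norm_num)
        ((mul_two_pow_half_lt_two_pow_div_five hj).trans_le (Nat.div_le_div_right hjs))

theorem two_pow_mul_four_pow_mul_sixteen_pow_le (s : ℕ) :
    2 ^ (s / 5) * 4 ^ (6 * s / 5) * 16 ^ s ≤ 108 ^ s := by
  obtain ⟨t, u, hu, rfl⟩ : ∃ t u, u < 5 ∧ s = 5 * t + u :=
    ⟨s / 5, s % 5, Nat.mod_lt _ (by norm_num), (Nat.div_add_mod s 5).symm⟩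
  rw [show (5 * t + u) / 5 = t by omega, show 6 * (5 * t + u) / 5 = 6 * t + u by omega]
  calc 2 ^ t * 4 ^ (6 * t + u) * 16 ^ (5 * t + u) = (2 * 4 ^ 6 * 16 ^ 5) ^ t * (4 * 16) ^ u := by
        rw [mul_pow, mul_pow, mul_pow, ← pow_mul, ← pow_mul]; ring
    _ ≤ (108 ^ 5) ^ t * 108 ^ u := by gcongr <;> norm_num
    _ = 108 ^ (5 * t + u) := by rw [← pow_mul, ← pow_add]

theorem exists_prime_four_mul_lt_le_six_mul {s : ℕ} (hs : 2 ^ 18 ≤ s) :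
    ∃ p, p.Prime ∧ 4 * s < p ∧ p ≤ 6 * s := by
  by_contra! hnp
  set X := (6 * s + 1) * (6 * s) ^ (Nat.sqrt (6 * s) + 1)
  set Q := 4 ^ (6 * s / 5)
  set B := (6 * s).choose (2 * s)
  set C := (3 * s).choose s
  have hB : B ≤ (6 * s) ^ (Nat.sqrt (6 * s) + 1) * Q * C :=
    choose_six_mul_le_of_no_prime_between (by omega) hnp
  have hlow : 729 ^ s ≤ (6 * s + 1) * (B * 16 ^ s) := by
    have h := Nat.three_pow_le_succ_mul_choose_mul_two_pow (2 * s)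
    rw [← Nat.choose_symm_of_eq_add (show 3 * (2 * s) = 2 * s + 2 * (2 * s) by ring),
      show 3 * (2 * s) = 6 * s by ring, show 2 * (2 * s) = 4 * s by ring] at h
    simpa [pow_mul] using h
  have hup : C * 4 ^ s ≤ 27 ^ s := by
    simpa [pow_mul] using Nat.choose_mul_two_pow_le_three_pow s
  have hX : 2 ^ (s / 5) ≤ X := by
    refine Nat.le_of_mul_le_mul_right (c := Q * 16 ^ s * 27 ^ s) ?_ (by positivity)
    calc 2 ^ (s / 5) * (Q * 16 ^ s * 27 ^ s) ≤ 108 ^ s * 27 ^ s := by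
          rw [← mul_assoc, ← mul_assoc]
          exact Nat.mul_le_mul_right _ (two_pow_mul_four_pow_mul_sixteen_pow_le s)
      _ = 729 ^ s * 4 ^ s := by rw [← mul_pow, ← mul_pow]; norm_num
      _ ≤ (6 * s + 1) * (B * 16 ^ s) * 4 ^ s := by gcongr
      _ ≤ (6 * s + 1) * ((6 * s) ^ (Nat.sqrt (6 * s) + 1) * Q * C * 16 ^ s) * 4 ^ s := by gcongr
      _ = X * Q * 16 ^ s * (C * 4 ^ s) := by ring
      _ ≤ X * Q * 16 ^ s * 27 ^ s := by gcongr
      _ = X * (Q * 16 ^ s * 27 ^ s) := by ring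
  exact (succ_mul_pow_sqrt_lt_two_pow hs).not_ge hX

theorem exists_prime_three_mul_le_lt_five_mul_of_cover {N : ℕ} (q : ℕ) {p : ℕ} (hp : p.Prime)
    (hcover : 3 * p ≤ 5 * q) (H : N < 5 * q → ∃ p, p.Prime ∧ 3 * p ≤ N ∧ N < 5 * p) :
    N < 5 * p → ∃ p, p.Prime ∧ 3 * p ≤ N ∧ N < 5 * p := by
  intro hN
  rcases lt_or_ge N (5 * q) with h | h
  · exact H h
  · exact ⟨p, hp, by omega, hN⟩

theorem exists_prime_three_mul_le_lt_five_mul {N : ℕ} (hN : 21 ≤ N) :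
    ∃ p, p.Prime ∧ 3 * p ≤ N ∧ N < 5 * p := by
  rcases lt_or_ge N (5 * 1589941) with hsmall | hlarge
  · revert hsmall
    refine exists_prime_three_mul_le_lt_five_mul_of_cover 953977 (by norm_num) (by norm_num) ?_
    refine exists_prime_three_mul_le_lt_five_mul_of_cover 572387 (by norm_num) (by norm_num) ?_
    refine exists_prime_three_mul_le_lt_five_mul_of_cover 343433 (by norm_num) (by norm_num) ?_
    refine exists_prime_three_mul_le_lt_five_mul_of_cover 206083 (by norm_num) (by norm_num) ?_
    refine exists_prime_three_mul_le_lt_five_mul_of_cover 123661 (by norm_num) (by norm_num) ?_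
    refine exists_prime_three_mul_le_lt_five_mul_of_cover 74197 (by norm_num) (by norm_num) ?_
    refine exists_prime_three_mul_le_lt_five_mul_of_cover 44519 (by norm_num) (by norm_num) ?_
    refine exists_prime_three_mul_le_lt_five_mul_of_cover 26717 (by norm_num) (by norm_num) ?_
    refine exists_prime_three_mul_le_lt_five_mul_of_cover 16033 (by norm_num) (by norm_num) ?_
    refine exists_prime_three_mul_le_lt_five_mul_of_cover 9631 (by norm_num) (by norm_num) ?_
    refine exists_prime_three_mul_le_lt_five_mul_of_cover 5779 (by norm_num) (by norm_num) ?_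
    refine exists_prime_three_mul_le_lt_five_mul_of_cover 3469 (by norm_num) (by norm_num) ?_
    refine exists_prime_three_mul_le_lt_five_mul_of_cover 2089 (by norm_num) (by norm_num) ?_
    refine exists_prime_three_mul_le_lt_five_mul_of_cover 1259 (by norm_num) (by norm_num) ?_
    refine exists_prime_three_mul_le_lt_five_mul_of_cover 761 (by norm_num) (by norm_num) ?_
    refine exists_prime_three_mul_le_lt_five_mul_of_cover 461 (by norm_num) (by norm_num) ?_
    refine exists_prime_three_mul_le_lt_five_mul_of_cover 277 (by norm_num) (by norm_num) ?_
    refine exists_prime_three_mul_le_lt_five_mul_of_cover 167 (by norm_num) (by norm_num) ?_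
    refine exists_prime_three_mul_le_lt_five_mul_of_cover 101 (by norm_num) (by norm_num) ?_
    refine exists_prime_three_mul_le_lt_five_mul_of_cover 61 (by norm_num) (by norm_num) ?_
    refine exists_prime_three_mul_le_lt_five_mul_of_cover 37 (by norm_num) (by norm_num) ?_
    refine exists_prime_three_mul_le_lt_five_mul_of_cover 23 (by norm_num) (by norm_num) ?_
    refine exists_prime_three_mul_le_lt_five_mul_of_cover 17 (by norm_num) (by norm_num) ?_
    refine exists_prime_three_mul_le_lt_five_mul_of_cover 11 (by norm_num) (by norm_num) ?_
    refine exists_prime_three_mul_le_lt_five_mul_of_cover 7 (by norm_num) (by norm_num) ?_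
    exact fun h => ⟨7, by norm_num, by omega, h⟩
  · obtain ⟨p, hp, h4, h6⟩ := exists_prime_four_mul_lt_le_six_mul (s := N / 20 + 1) (by omega)
    exact ⟨p, hp, by omega, by omega⟩

theorem factorization_prod_four_mul_add_three_eq_one {n p : ℕ} (hp : p.Prime) (hp5 : 5 ≤ p)
    (hle : p ≤ 4 * n + 3) (hlt : 4 * n + 3 < 5 * p) (h1 : p % 4 = 1 → 3 * p ≤ 4 * n + 3) :
    (∏ i ∈ Icc 1 n, (4 * i + 3)).factorization p = 1 := by
  have hodd : p % 2 = 1 := Nat.odd_iff.mp (hp.odd_of_ne_two (by omega))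
  obtain ⟨i₀, k, hi₀, hk, hkp⟩ : ∃ i₀ k, i₀ ∈ Icc 1 n ∧ (k = 1 ∨ k = 3) ∧ 4 * i₀ + 3 = k * p := by
    rcases (by omega : p % 4 = 1 ∨ p % 4 = 3) with h | h
    · exact ⟨(3 * p - 3) / 4, 3, mem_Icc.mpr (by have := h1 h; omega), by simp, by omega⟩
    · exact ⟨(p - 3) / 4, 1, mem_Icc.mpr (by omega), by simp, by omega⟩
  have huniq : ∀ i ∈ Icc 1 n, p ∣ 4 * i + 3 → i = i₀ := by
    rintro i hi ⟨m, hm⟩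
    have hm5 : m < 5 := by
      by_contra! h
      have := Nat.mul_le_mul_left p h
      have := (mem_Icc.mp hi).2
      omega
    interval_cases m <;> rcases hk with rfl | rfl <;> omega
  rw [Nat.factorization_prod_eq_of_unique_dvd (fun i _ => by omega) hi₀ huniq, hkp]
  rcases hk with rfl | rfl
  · simp [hp.factorization_self]
  · rw [Nat.factorization_mul (by norm_num) hp.ne_zero, Finsupp.add_apply, hp.factorization_self,
      Nat.factorization_eq_zero_of_not_dvd fun h => by have := Nat.le_of_dvd (by norm_num) h; omega]

theorem product_four_i_plus_three_not_square (n : ℕ) (hn : 1 ≤ n) :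
    ¬ ∃ m : ℕ, (∏ i ∈ Finset.Icc 1 n, (4 * i + 3)) = m ^ 2 := by
  rintro ⟨m, hm⟩
  obtain ⟨p, hp, hp5, hle, hlt, h1⟩ : ∃ p, p.Prime ∧ 5 ≤ p ∧ p ≤ 4 * n + 3 ∧ 4 * n + 3 < 5 * p ∧
      (p % 4 = 1 → 3 * p ≤ 4 * n + 3) := by
    rcases lt_or_ge n 8 with hn8 | hn8
    · exact ⟨7, by norm_num, by norm_num, by omega, by omega, by norm_num⟩
    · obtain ⟨p, hp, h3, h5⟩ := exists_prime_three_mul_le_lt_five_mul (N := 4 * n + 3) (by omega)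
      exact ⟨p, hp, by omega, by omega, h5, fun _ => h3⟩
  have hval := factorization_prod_four_mul_add_three_eq_one hp hp5 hle hlt h1
  rw [hm, Nat.factorization_pow, Finsupp.smul_apply, smul_eq_mul] at hval
  omega
end

section
/- Let p ≥ 11 be a prime. Then there exists a prime q with p < q < 4p/3. -/
/-!
Chebyshev's method with Nagura's weights. For `N = n! ⌊n/30⌋!` and `D = ⌊n/2⌋! ⌊n/3⌋! ⌊n/5⌋!`,
Legendre's formula gives `log (N / D) = ∑_{m ≤ n} Λ(m) f(n/m)` with
`f(x) = ⌊x⌋ - ⌊x/2⌋ - ⌊x/3⌋ - ⌊x/5⌋ + ⌊x/30⌋ ∈ {0, 1}` and `f = 1` on `[1, 6)`; hence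
`θ(n) - θ(n/6) ≤ log (N / D) ≤ ψ(n)`. Stirling's formula gives `log (N / D) = A n + O(log n)` with
`A = 7/15 log 2 + 3/10 log 3 + 1/6 log 5 ≈ 0.9213`. With `ψ - θ = O(√n log n)` and Chebyshev's
`θ(n/6) ≤ (n/6) log 4` this yields `θ(4x/3) - θ(x) ≥ (A - log 2) x/3 - O(√x log x) > 0` once
`x ≥ 2^18`; below that a chain of primes, each less than `4/3` of the previous one, suffices.
-/

open Real Chebyshev
open scoped Nat

namespace Nagura

theorem log_factorial_le {n : ℕ} (hn : n ≠ 0) :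
    log n ! ≤ n * log n - n + log n / 2 + 1 := by
  obtain ⟨m, rfl⟩ := Nat.exists_eq_add_one_of_ne_zero hn
  have hseq : log (Stirling.stirlingSeq (m + 1)) ≤ log (Stirling.stirlingSeq 1) :=
    Stirling.log_stirlingSeq'_antitone (Nat.zero_le m)
  have hm : (0 : ℝ) < (m + 1 : ℕ) := by positivity
  rw [Stirling.log_stirlingSeq_formula, Stirling.log_stirlingSeq_formula,
    log_mul two_ne_zero hm.ne', log_div hm.ne' (exp_ne_zero 1), log_exp] at hseq
  norm_num at hseq
  push_cast
  linarith

theorem mul_log_sub_le {m x : ℝ} (hm : 0 < m) (hx : 0 < x) :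
    x * (log m - log x) ≤ m - x :=
  calc x * (log m - log x) ≤ x * (m / x - 1) := by
        rw [← log_div hm.ne' hx.ne']; gcongr; exact log_le_sub_one_of_pos (by positivity)
    _ = m - x := by field_simp

theorem abs_log_factorial_floor_sub_le {x : ℝ} (hx : 1 ≤ x) :
    |log ⌊x⌋₊ ! - (x * log x - x)| ≤ log x + 1 := by
  set m := ⌊x⌋₊
  have hm0 : m ≠ 0 := (Nat.floor_pos.mpr hx).ne'
  have hm1 : (1 : ℝ) ≤ m := by exact_mod_cast Nat.one_le_iff_ne_zero.mpr hm0
  have hmx : (m : ℝ) ≤ x := Nat.floor_le (by linarith)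
  have hxm : x < m + 1 := Nat.lt_floor_add_one x
  have hlogm : 0 ≤ log m := log_nonneg hm1
  have hlogmx : log m ≤ log x := log_le_log (by linarith) hmx
  have hstir_lo := Stirling.le_log_factorial_stirling hm0
  have hstir_hi := log_factorial_le hm0
  have h2pi : 0 ≤ log (2 * π) := log_nonneg (by linarith [pi_gt_three])
  have hx0 : 0 < x := by linarith
  have hslope_lo := mul_log_sub_le (m := (m : ℝ)) (x := x) (by linarith) hx0
  have hslope_hi := mul_log_sub_le (m := x) (x := (m : ℝ)) hx0 (by linarith)
  have h1 : 0 ≤ (x - m) * log m := mul_nonneg (by linarith) hlogm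
  have h2 : (x - m) * log x ≤ log x :=
    mul_le_of_le_one_left (log_nonneg hx) (by linarith)
  rw [abs_sub_le_iff]
  constructor <;> linarith

def chebyshevNum (n : ℕ) : ℕ := n ! * (n / 30)!

def chebyshevDen (n : ℕ) : ℕ := (n / 2)! * (n / 3)! * (n / 5)!

noncomputable def chebyshevRatio (n : ℕ) : ℝ := chebyshevNum n / chebyshevDen n

noncomputable def chebyshevConst : ℝ := 7 / 15 * log 2 + 3 / 10 * log 3 + 1 / 6 * log 5

theorem chebyshevNum_pos (n : ℕ) : 0 < chebyshevNum n := by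
  unfold chebyshevNum; positivity

theorem chebyshevDen_pos (n : ℕ) : 0 < chebyshevDen n := by
  unfold chebyshevDen; positivity

theorem factorization_factorial_div {q : ℕ} (hq : q.Prime) (n k : ℕ) :
    (n / k)!.factorization q = ∑ i ∈ Finset.Ico 1 (Nat.log q n + 1), n / q ^ i / k := by
  rw [Nat.factorization_factorial hq
    ((Nat.log_mono_right (Nat.div_le_self n k)).trans_lt (Nat.lt_succ_self _))]
  exact Finset.sum_congr rfl fun i _ ↦ Nat.div_right_comm n k (q ^ i)

theorem factorization_chebyshevNum {q : ℕ} (hq : q.Prime) (n : ℕ) :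
    (chebyshevNum n).factorization q
      = ∑ i ∈ Finset.Ico 1 (Nat.log q n + 1), (n / q ^ i + n / q ^ i / 30) := by
  rw [chebyshevNum, Nat.factorization_mul (Nat.factorial_ne_zero _) (Nat.factorial_ne_zero _),
    Finsupp.add_apply, Nat.factorization_factorial hq (Nat.lt_succ_self _),
    factorization_factorial_div hq, Finset.sum_add_distrib]

theorem factorization_chebyshevDen {q : ℕ} (hq : q.Prime) (n : ℕ) :
    (chebyshevDen n).factorization q
      = ∑ i ∈ Finset.Ico 1 (Nat.log q n + 1), (n / q ^ i / 2 + n / q ^ i / 3 + n / q ^ i / 5) := by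
  simp only [chebyshevDen, Nat.factorization_mul, Nat.factorial_ne_zero, mul_ne_zero_iff,
    ne_eq, not_false_eq_true, and_self, Finsupp.add_apply, factorization_factorial_div hq,
    Finset.sum_add_distrib]

theorem factorization_chebyshevDen_le {q : ℕ} (hq : q.Prime) (n : ℕ) :
    (chebyshevDen n).factorization q ≤ (chebyshevNum n).factorization q := by
  rw [factorization_chebyshevNum hq, factorization_chebyshevDen hq]
  exact Finset.sum_le_sum fun i _ ↦ by omega

theorem factorization_chebyshevNum_le {q : ℕ} (hq : q.Prime) (n : ℕ) :
    (chebyshevNum n).factorization q ≤ (chebyshevDen n).factorization q + Nat.log q n := by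
  rw [factorization_chebyshevNum hq, factorization_chebyshevDen hq]
  calc _ ≤ ∑ i ∈ Finset.Ico 1 (Nat.log q n + 1),
        ((n / q ^ i / 2 + n / q ^ i / 3 + n / q ^ i / 5) + 1) :=
        Finset.sum_le_sum fun i _ ↦ by omega
    _ = _ := by simp [Finset.sum_add_distrib]

theorem factorization_chebyshevDen_lt {q : ℕ} (hq : q.Prime) (n : ℕ) (hq6 : n / 6 < q)
    (hqn : q ≤ n) :
    (chebyshevDen n).factorization q < (chebyshevNum n).factorization q := by
  rw [factorization_chebyshevNum hq, factorization_chebyshevDen hq]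
  have hdiv : 0 < n / q ∧ n / q < 6 :=
    ⟨Nat.div_pos hqn hq.pos, Nat.div_lt_of_lt_mul (by omega)⟩
  refine Finset.sum_lt_sum (fun i _ ↦ by omega) ⟨1, ?_, by simp only [pow_one]; omega⟩
  simpa using Nat.log_pos hq.one_lt hqn

theorem chebyshevNum_dvd_chebyshevDen_mul_lcmUpto (n : ℕ) :
    chebyshevNum n ∣ chebyshevDen n * n.lcmUpto := by
  rw [← Nat.factorization_le_iff_dvd ((chebyshevNum_pos n).ne')
    (mul_ne_zero ((chebyshevDen_pos n).ne') (Nat.lcmUpto_ne_zero n))]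
  intro q
  by_cases hq : q.Prime
  · rw [Nat.factorization_mul ((chebyshevDen_pos n).ne') (Nat.lcmUpto_ne_zero n),
      Finsupp.add_apply, Nat.factorization_lcmUpto n hq]
    exact factorization_chebyshevNum_le hq n
  · simp [Nat.factorization_eq_zero_of_not_prime _ hq]

theorem chebyshevDen_mul_primorial_dvd (n : ℕ) :
    chebyshevDen n * primorial n ∣ chebyshevNum n * primorial (n / 6) := by
  rw [← Nat.factorization_le_iff_dvd (mul_ne_zero ((chebyshevDen_pos n).ne') (primorial_ne_zero n))
    (mul_ne_zero ((chebyshevNum_pos n).ne') (primorial_ne_zero _))]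
  intro q
  by_cases hq : q.Prime
  · rw [Nat.factorization_mul ((chebyshevDen_pos n).ne') (primorial_ne_zero n),
      Nat.factorization_mul ((chebyshevNum_pos n).ne') (primorial_ne_zero _),
      Finsupp.add_apply, Finsupp.add_apply]
    have hle := factorization_chebyshevDen_le hq n
    have hsq := (squarefree_primorial n).natFactorization_le_one q
    by_cases hq6 : q ≤ n / 6
    · have := hq.factorization_pos_of_dvd (primorial_ne_zero _) (hq.dvd_primorial_iff.mpr hq6)
      omega
    by_cases hqn : q ≤ n
    · have := factorization_chebyshevDen_lt hq n (by omega) hqn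
      omega
    · have : (primorial n).factorization q = 0 :=
        Nat.factorization_eq_zero_of_not_dvd (mt hq.dvd_primorial_iff.mp hqn)
      omega
  · simp [Nat.factorization_eq_zero_of_not_prime _ hq]

theorem log_chebyshevRatio_le_psi (n : ℕ) : log (chebyshevRatio n) ≤ ψ n := by
  have hN : (0 : ℝ) < chebyshevNum n := by exact_mod_cast chebyshevNum_pos n
  have hD : (0 : ℝ) < chebyshevDen n := by exact_mod_cast chebyshevDen_pos n
  have hL : (0 : ℝ) < n.lcmUpto := by exact_mod_cast Nat.lcmUpto_pos n
  have h : log (chebyshevNum n) ≤ log (chebyshevDen n * n.lcmUpto) := by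
    apply log_le_log hN
    exact_mod_cast Nat.le_of_dvd (Nat.mul_pos (chebyshevDen_pos n) (Nat.lcmUpto_pos n))
      (chebyshevNum_dvd_chebyshevDen_mul_lcmUpto n)
  rw [log_mul hD.ne' hL.ne'] at h
  rw [psi_eq_log_lcmUpto, chebyshevRatio, log_div hN.ne' hD.ne']
  linarith

theorem theta_sub_theta_div_six_le (n : ℕ) : θ n - θ (n / 6 : ℕ) ≤ log (chebyshevRatio n) := by
  have hN : (0 : ℝ) < chebyshevNum n := by exact_mod_cast chebyshevNum_pos n
  have hD : (0 : ℝ) < chebyshevDen n := by exact_mod_cast chebyshevDen_pos n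
  have hP : ∀ m, (0 : ℝ) < primorial m := fun m ↦ by exact_mod_cast primorial_pos m
  have h : log (chebyshevDen n * primorial n) ≤ log (chebyshevNum n * primorial (n / 6)) := by
    apply log_le_log (mul_pos hD (hP n))
    exact_mod_cast Nat.le_of_dvd (Nat.mul_pos (chebyshevNum_pos n) (primorial_pos _))
      (chebyshevDen_mul_primorial_dvd n)
  rw [log_mul hD.ne' (hP n).ne', log_mul hN.ne' (hP _).ne'] at h
  rw [theta_eq_log_primorial, theta_eq_log_primorial, Nat.floor_natCast, Nat.floor_natCast,
    chebyshevRatio, log_div hN.ne' hD.ne']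
  linarith

theorem chebyshevConst_mul_eq {x : ℝ} (hx : 0 < x) :
    (x * log x - x) + (x / 30 * log (x / 30) - x / 30) - (x / 2 * log (x / 2) - x / 2)
      - (x / 3 * log (x / 3) - x / 3) - (x / 5 * log (x / 5) - x / 5) = chebyshevConst * x := by
  have h30 : log 30 = log 2 + log 3 + log 5 := by
    rw [show (30 : ℝ) = 2 * 3 * 5 by norm_num, log_mul (by norm_num) (by norm_num),
      log_mul (by norm_num) (by norm_num)]
  simp only [log_div hx.ne' (by norm_num : (30 : ℝ) ≠ 0), log_div hx.ne' (two_ne_zero),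
    log_div hx.ne' (by norm_num : (3 : ℝ) ≠ 0), log_div hx.ne' (by norm_num : (5 : ℝ) ≠ 0), h30,
    chebyshevConst]
  ring

theorem abs_log_chebyshevRatio_sub_le {n : ℕ} (hn : 30 ≤ n) :
    |log (chebyshevRatio n) - chebyshevConst * n| ≤ 5 * (log n + 1) := by
  have hn0 : (0 : ℝ) < n := by exact_mod_cast (by omega : 0 < n)
  have hstir : ∀ k : ℕ, 0 < k → k ≤ n →
      |log (n / k)! - ((n / k : ℝ) * log (n / k) - n / k)| ≤ log n + 1 := by
    intro k hk hkn
    have hk' : (0 : ℝ) < k := by exact_mod_cast hk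
    have hx : (1 : ℝ) ≤ n / k := by rw [le_div_iff₀ hk']; exact_mod_cast (by omega : 1 * k ≤ n)
    have h := abs_log_factorial_floor_sub_le hx
    rw [Nat.floor_div_natCast, Nat.floor_natCast] at h
    have : log (n / k : ℝ) ≤ log n := log_le_log (by linarith) (div_le_self hn0.le (by
      exact_mod_cast hk))
    linarith
  have h1 := hstir 1 one_pos (by omega)
  have h2 := hstir 2 two_pos (by omega)
  have h3 := hstir 3 (by norm_num) (by omega)
  have h5 := hstir 5 (by norm_num) (by omega)
  have h30 := hstir 30 (by norm_num) (by omega)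
  simp only [Nat.div_one, Nat.cast_one, div_one] at h1
  have hlog : log (chebyshevRatio n)
      = log n ! + log (n / 30)! - log (n / 2)! - log (n / 3)! - log (n / 5)! := by
    have hf : ∀ m : ℕ, (m ! : ℝ) ≠ 0 := fun m ↦ by exact_mod_cast m.factorial_ne_zero
    rw [chebyshevRatio, chebyshevNum, chebyshevDen, Nat.cast_mul, Nat.cast_mul, Nat.cast_mul,
      log_div (by simp [hf]) (by simp [hf]), log_mul (hf _) (hf _), log_mul (by simp [hf]) (hf _),
      log_mul (hf _) (hf _)]
    ring
  rw [hlog, ← chebyshevConst_mul_eq hn0]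
  rw [abs_le] at h1 h2 h3 h5 h30 ⊢
  constructor <;> linarith [h1.1, h1.2, h2.1, h2.2, h3.1, h3.2, h5.1, h5.2, h30.1, h30.2]

-- `30 * chebyshevConst = log (2 ^ 14 * 3 ^ 9 * 5 ^ 5)`, and `(2 ^ 14 * 3 ^ 9 * 5 ^ 5) ^ 5 > 2 ^ 199`.
theorem log_two_mul_lt_chebyshevConst : 199 / 150 * log 2 < chebyshevConst := by
  have h : log ((2 : ℝ) ^ 199) < log (((2 : ℝ) ^ 14 * 3 ^ 9 * 5 ^ 5) ^ 5) :=
    log_lt_log (by positivity) (by norm_num)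
  simp only [log_pow, log_mul, ne_eq, pow_eq_zero_iff, OfNat.ofNat_ne_zero, not_false_eq_true,
    mul_ne_zero_iff, and_self] at h
  rw [chebyshevConst]
  push_cast at h
  linarith

theorem chebyshevConst_mul_sub_le_theta {n : ℕ} (hn : 30 ≤ n) :
    chebyshevConst * n - 5 * (log n + 1) - 2 * √n * log n ≤ θ n := by
  have h := abs_log_chebyshevRatio_sub_le hn
  have hψ := log_chebyshevRatio_le_psi n
  have hψθ := psi_sub_theta_le (x := n) (by exact_mod_cast (by omega : 1 ≤ n))
  rw [abs_le] at h
  linarith [h.1]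

theorem theta_le_chebyshevConst_mul_add {n : ℕ} (hn : 30 ≤ n) :
    θ n ≤ chebyshevConst * n + 5 * (log n + 1) + log 2 * n / 3 := by
  have h := abs_log_chebyshevRatio_sub_le hn
  have hθ := theta_sub_theta_div_six_le n
  have h6 : θ (n / 6 : ℕ) ≤ log 2 * n / 3 :=
    calc θ (n / 6 : ℕ) ≤ log 4 * (n / 6 : ℕ) := theta_le_log4_mul_x (Nat.cast_nonneg _)
      _ ≤ log 4 * (n / 6) := by gcongr; exact Nat.cast_div_le
      _ = log 2 * n / 3 := by
        rw [show (4 : ℝ) = 2 ^ 2 by norm_num, log_pow]; ring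
  rw [abs_le] at h
  linarith [h.2]

theorem log_le_sqrt_div_forty {x : ℝ} (hx : 2 ^ 18 ≤ x) : log x ≤ √x / 40 := by
  have hlog2 := log_two_lt_d9
  have hsqrt : √((2 : ℝ) ^ 18) = 2 ^ 9 := by
    rw [show (2 : ℝ) ^ 18 = (2 ^ 9) ^ 2 by norm_num, sqrt_sq (by norm_num)]
  have he : rexp 2 ≤ 2 ^ 18 := by
    rw [← le_log_iff_exp_le (by norm_num), log_pow]; push_cast; linarith [log_two_gt_d9]
  have h := log_div_sqrt_antitoneOn (Set.mem_Ici.mpr he) (Set.mem_Ici.mpr (he.trans hx)) hx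
  dsimp only at h
  rw [log_pow, hsqrt] at h
  have hs : 0 < √x := sqrt_pos.mpr (by linarith)
  rw [div_le_iff₀ hs] at h
  push_cast at h
  nlinarith

theorem theta_lt_theta_four_thirds {p : ℕ} (hp : 2 ^ 18 ≤ p) :
    θ p < θ ((4 * p - 1) / 3 : ℕ) := by
  set n := (4 * p - 1) / 3
  have hpn : p ≤ n := by omega
  have hnp : (4 * p : ℝ) ≤ 3 * n + 3 := by exact_mod_cast (by omega : 4 * p ≤ 3 * n + 3)
  have hnp' : (3 * n : ℝ) ≤ 4 * p := by exact_mod_cast (by omega : 3 * n ≤ 4 * p)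
  have hp' : (2 ^ 18 : ℝ) ≤ p := by exact_mod_cast hp
  have hn' : (2 ^ 18 : ℝ) ≤ n := hp'.trans (by exact_mod_cast hpn)
  have hlo := chebyshevConst_mul_sub_le_theta (n := n) (by omega)
  have hhi := theta_le_chebyshevConst_mul_add (n := p) (by omega)
  have hA := log_two_mul_lt_chebyshevConst
  have hlog2 := log_two_gt_d9
  have hlogp : log p ≤ log n := log_le_log (by linarith) (by exact_mod_cast hpn)
  have hlogn := log_le_sqrt_div_forty hn'
  have hsq : √n * √n = n := mul_self_sqrt (by linarith)
  have hs : 2 ^ 9 ≤ √(n : ℝ) := by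
    rw [le_sqrt (by norm_num) (by linarith)]; linarith
  have hsn : 2 ^ 9 * √n ≤ n := (mul_le_mul_of_nonneg_right hs (sqrt_nonneg _)).trans_eq hsq
  have hsqrt_log : √n * log n ≤ √n * (√n / 40) := mul_le_mul_of_nonneg_left hlogn (sqrt_nonneg _)
  have hgap : 199 / 150 * log 2 * (n - p) ≤ chebyshevConst * (n - p) :=
    mul_le_mul_of_nonneg_right hA.le (by linarith [(by exact_mod_cast hpn : (p : ℝ) ≤ n)])
  have hlog2gap : 0.6931 * (49 / 450 * p - 199 / 150) ≤ log 2 * (49 / 450 * p - 199 / 150) :=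
    mul_le_mul_of_nonneg_right (by linarith) (by linarith)
  have hnp2 : log 2 * (p / 3 - 1) ≤ log 2 * (n - p) :=
    mul_le_mul_of_nonneg_left (by linarith) (by linarith)
  -- the main terms differ by `chebyshevConst * (n - p) - log 2 * p / 3 ≥ 0.075 * p - 1`, while
  -- the error terms add up to at most `n / 20 + n / 2048 + 10 ≤ 0.068 * p + 10`
  linarith

theorem exists_prime_of_theta_lt {a b : ℕ} (h : θ a < θ b) : ∃ q, q.Prime ∧ a < q ∧ q ≤ b := by
  by_contra! H
  refine h.not_ge ?_
  rw [theta_eq_sum_primesLE_log, theta_eq_sum_primesLE_log]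
  refine Finset.sum_le_sum_of_subset_of_nonneg (fun q hq ↦ ?_) fun q _ _ ↦ log_natCast_nonneg q
  rw [Nat.mem_primesLE] at hq ⊢
  exact ⟨not_lt.mp fun hlt ↦ (H q hq.2 hlt).not_ge hq.1, hq.2⟩

theorem exists_prime_of_isChain {a : ℕ} {L : List ℕ}
    (hL : (a :: L).IsChain fun a b ↦ b.Prime ∧ 3 * b < 4 * a) {p : ℕ} (hap : a ≤ p)
    (hpL : p < (a :: L).getLast (List.cons_ne_nil a L)) :
    ∃ q, q.Prime ∧ p < q ∧ 3 * q < 4 * p := by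
  induction L generalizing a with
  | nil => simp only [List.getLast_singleton] at hpL; omega
  | cons b L ih =>
    obtain ⟨⟨hb, hba⟩, hL⟩ := List.isChain_cons_cons.mp hL
    rcases lt_or_ge p b with hpb | hbp
    · exact ⟨b, hb, hpb, by omega⟩
    · exact ih hL hbp (by rwa [List.getLast_cons_cons] at hpL)

theorem exists_prime_of_lt {p : ℕ} (h11 : 11 ≤ p) (hp : p < 2 ^ 18) :
    ∃ q, q.Prime ∧ p < q ∧ 3 * q < 4 * p :=
  exists_prime_of_isChain (L := [13, 17, 19, 23, 29, 37, 47, 61, 79, 103, 137, 181, 241, 317,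
    421, 557, 739, 983, 1307, 1741, 2311, 3079, 4099, 5449, 7253, 9661, 12853, 17137, 22817, 30403,
    40531, 54037, 72047, 96059, 128053, 170711, 227611, 303473]) (by norm_num) h11
    (hp.trans (by norm_num))

end Nagura

theorem nagura_prime_between_general (p : ℕ) (h11 : 11 ≤ p) :
    ∃ q : ℕ, q.Prime ∧ p < q ∧ 3 * q < 4 * p := by
  rcases lt_or_ge p (2 ^ 18) with hp | hp
  · exact Nagura.exists_prime_of_lt h11 hp
  · obtain ⟨q, hq, hpq, hqn⟩ :=
      Nagura.exists_prime_of_theta_lt (Nagura.theta_lt_theta_four_thirds hp)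
    exact ⟨q, hq, hpq, by omega⟩

theorem nagura_prime_between (p : ℕ) (hp : p.Prime) (h11 : 11 ≤ p) :
    ∃ q : ℕ, q.Prime ∧ p < q ∧ 3 * q < 4 * p :=
  nagura_prime_between_general p h11
end

section
/- The unique partition of n = c(c+1)/2 which is a 2-core is the staircase γ_c = (c, c-1, ..., 1); in particular, the staircase partition γ_c is self-conjugate. -/
/-!
In a partition without 2-hooks, consecutive parts `λ_i ≥ λ_{i+1}` (with `λ_{ℓ+1} = 0`) differ by
exactly one: if `λ_i ≥ λ_{i+1} + 2` the cell `(i, λ_i - 1)` has hook length 2, and if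
`λ_i = λ_{i+1} > 0` so does the cell just above the bottom of column `λ_i`. Hence the partition is
the staircase `γ_ℓ` of its length `ℓ`, and `ℓ` is fixed by the size `c(c+1)/2`. Conversely, all
hook lengths `2(c + 1 - i - j) + 1` of `γ_c` are odd.

Parts are read as `l.getD k 0 = λ_{k+1}`, which is `0` past the end of `l`.
-/

section GetD

variable {l : List ℕ}

theorem getD_le_getD_of_le (hl : l.Pairwise (· ≥ ·)) {i k : ℕ} (hik : i ≤ k) :
    l.getD k 0 ≤ l.getD i 0 := by
  rcases hik.eq_or_lt with rfl | hlt
  · rfl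
  rcases lt_or_ge k l.length with hk | hk
  · rw [List.getD_eq_getElem _ 0 hk, List.getD_eq_getElem _ 0 (hlt.trans hk)]
    exact hl.rel_get_of_lt hlt
  · rw [List.getD_eq_default _ _ hk]
    exact Nat.zero_le _

theorem lt_length_of_pos_getD {k : ℕ} (h : 0 < l.getD k 0) : k < l.length := by
  by_contra hk
  rw [List.getD_eq_default _ _ (not_lt.mp hk)] at h
  exact h.false

end GetD

section ConjPart

variable {l : List ℕ}

theorem conjPart_cons (a j : ℕ) :
    conjPart (a :: l) j = (if j ≤ a then 1 else 0) + conjPart l j := by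
  simp only [conjPart, List.filter_cons, decide_eq_true_eq]
  split <;> simp [Nat.add_comm]

theorem lt_conjPart_iff (hl : l.Pairwise (· ≥ ·)) (j k : ℕ) :
    k < conjPart l j ↔ k < l.length ∧ j ≤ l.getD k 0 := by
  induction l generalizing k with
  | nil => simp [conjPart]
  | cons a t ih =>
    rw [List.pairwise_cons] at hl
    by_cases hja : j ≤ a
    · cases k with
      | zero => simp [conjPart_cons, hja]
      | succ k => simp [conjPart_cons, hja, ih hl.2, Nat.add_comm 1]
    · have htail : conjPart t j = 0 := by
        simp only [conjPart, List.length_eq_zero_iff, List.filter_eq_nil_iff, decide_eq_true_eq]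
        exact fun x hx hjx => hja (hjx.trans (hl.1 x hx))
      have hhead : (a :: t).getD k 0 ≤ a := by
        simpa using getD_le_getD_of_le (List.pairwise_cons.mpr hl) k.zero_le
      simp only [conjPart_cons, hja, htail, if_false]
      omega

theorem cellMem_iff (hl : l.Pairwise (· ≥ ·)) (i j : ℕ) :
    cellMem l i j ↔ 1 ≤ i ∧ 1 ≤ j ∧ i ≤ conjPart l j := by
  have := lt_conjPart_iff hl j (i - 1)
  unfold cellMem
  omega

end ConjPart

section Staircase

theorem staircase_succ (c : ℕ) : staircase (c + 1) = (c + 1) :: staircase c := by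
  simp [staircase, List.range_succ]

theorem length_staircase (c : ℕ) : (staircase c).length = c := by
  simp [staircase]

theorem getD_staircase (c k : ℕ) : (staircase c).getD k 0 = c - k := by
  induction c generalizing k with
  | zero => simp [staircase]
  | succ c ih =>
    cases k with
    | zero => simp [staircase_succ]
    | succ k => simp only [staircase_succ, List.getD_cons_succ, ih]; omega

theorem isPartition_staircase (c : ℕ) : IsPartition (staircase c) := by
  induction c with
  | zero => simp [IsPartition, staircase]
  | succ c ih =>
    obtain ⟨hsort, hpos⟩ := ih
    have hle : ∀ x ∈ staircase c, x ≤ c := by simp [staircase]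
    rw [staircase_succ, IsPartition, List.pairwise_cons]
    exact ⟨⟨fun x hx => (hle x hx).trans c.le_succ, hsort⟩, by simpa using hpos⟩

theorem strictMono_sum_staircase : StrictMono fun c => (staircase c).sum :=
  strictMono_nat_of_lt_succ fun c => by simp [staircase_succ]

theorem sum_staircase (c : ℕ) : (staircase c).sum = c * (c + 1) / 2 := by
  suffices 2 * (staircase c).sum = c * (c + 1) by omega
  induction c with
  | zero => simp [staircase]
  | succ c ih => rw [staircase_succ, List.sum_cons, mul_add, ih]; ring

theorem conjPart_staircase (c : ℕ) {j : ℕ} (hj : 1 ≤ j) :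
    conjPart (staircase c) j = c + 1 - j := by
  induction c with
  | zero => simp [staircase, conjPart]; omega
  | succ c ih => rw [staircase_succ, conjPart_cons, ih]; split <;> omega

theorem conjList_staircase (c : ℕ) : conjList (staircase c) = staircase c := by
  have hhead : (staircase c).headD 0 = c := by
    cases c with
    | zero => rfl
    | succ c => rw [staircase_succ]; rfl
  rw [conjList, hhead]
  refine List.ext_getElem (by simp [length_staircase]) fun k hk hk' => ?_
  rw [← List.getD_eq_getElem _ 0 hk', getD_staircase]
  simp [conjPart_staircase c (Nat.le_add_left 1 k)]

end Staircase

section Hooks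

variable {l : List ℕ}

theorem hookLength_staircase (c : ℕ) {i j : ℕ} (hi : 1 ≤ i) (hj : 1 ≤ j) :
    hookLength (staircase c) i j = 2 * (c + 1 - i - j) + 1 := by
  rw [hookLength, getD_staircase, conjPart_staircase c hj]
  omega

theorem not_hasHook_two_staircase (c : ℕ) : ¬ HasHook (staircase c) 2 := by
  rintro ⟨i, j, ⟨hi, -, hj, -⟩, hhook⟩
  rw [hookLength_staircase c hi hj] at hhook
  omega

theorem hasHook_two_of_add_two_le_getD (hl : l.Pairwise (· ≥ ·)) {k : ℕ}
    (hgap : l.getD (k + 1) 0 + 2 ≤ l.getD k 0) : HasHook l 2 := by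
  set a := l.getD k 0
  have hk : k < l.length := lt_length_of_pos_getD (by omega)
  have hconj : conjPart l (a - 1) = k + 1 := by
    have hlt := (lt_conjPart_iff hl (a - 1) k).mpr ⟨hk, by omega⟩
    have hge : ¬ k + 1 < conjPart l (a - 1) := fun h => by
      have := ((lt_conjPart_iff hl _ _).mp h).2
      omega
    omega
  refine ⟨k + 1, a - 1, (cellMem_iff hl _ _).mpr ⟨by omega, by omega, by omega⟩, ?_⟩
  simp only [hookLength, Nat.add_sub_cancel, hconj]
  omega

theorem hasHook_two_of_getD_succ_eq (hl : l.Pairwise (· ≥ ·)) {k : ℕ}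
    (hpos : 0 < l.getD (k + 1) 0) (heq : l.getD (k + 1) 0 = l.getD k 0) : HasHook l 2 := by
  set a := l.getD k 0
  set t := conjPart l a
  -- the cell `(t - 1, a)` sits right above the bottom cell `(t, a)` of column `a`
  have ht : k + 1 < t :=
    (lt_conjPart_iff hl _ _).mpr ⟨lt_length_of_pos_getD hpos, heq.ge⟩
  have hrow : l.getD (t - 2) 0 = a :=
    le_antisymm (getD_le_getD_of_le hl (by omega))
      ((lt_conjPart_iff hl _ _).mp (show t - 2 < t by omega)).2
  refine ⟨t - 1, a, (cellMem_iff hl _ _).mpr ⟨by omega, by omega, by omega⟩, ?_⟩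
  rw [hookLength, show t - 1 - 1 = t - 2 by omega, hrow]
  omega

end Hooks

section NoTwoHook

variable {l : List ℕ}

theorem getD_eq_getD_succ_add_one (hl : IsPartition l) (hno : ¬ HasHook l 2) {k : ℕ}
    (hk : k < l.length) :
    l.getD k 0 = l.getD (k + 1) 0 + 1 := by
  have hpos : 0 < l.getD k 0 := by
    rw [List.getD_eq_getElem _ 0 hk]
    exact hl.2 _ (List.getElem_mem hk)
  have hle := getD_le_getD_of_le hl.1 (k.le_add_right 1)
  have hgap := mt (hasHook_two_of_add_two_le_getD hl.1 (k := k)) hno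
  have hne : ¬ (0 < l.getD (k + 1) 0 ∧ l.getD (k + 1) 0 = l.getD k 0) := fun h =>
    hno (hasHook_two_of_getD_succ_eq hl.1 h.1 h.2)
  omega

theorem getD_eq_length_sub (hl : IsPartition l) (hno : ¬ HasHook l 2) (k : ℕ) :
    l.getD k 0 = l.length - k := by
  induction hm : l.length - k generalizing k with
  | zero => exact List.getD_eq_default _ _ (by omega)
  | succ m ih =>
    rw [getD_eq_getD_succ_add_one hl hno (by omega), ih (k + 1) (by omega)]

theorem eq_staircase_length (hl : IsPartition l) (hno : ¬ HasHook l 2) : l = staircase l.length :=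
  List.ext_getElem (length_staircase _).symm fun k hk hk' => by
    rw [← List.getD_eq_getElem _ 0 hk, ← List.getD_eq_getElem _ 0 hk',
      getD_eq_length_sub hl hno, getD_staircase]

end NoTwoHook

theorem staircase_unique_two_core_and_self_conjugate (c : ℕ) :
    (IsPartition (staircase c) ∧ (staircase c).sum = c * (c + 1) / 2 ∧
      ¬ HasHook (staircase c) 2) ∧
    (∀ l : List ℕ, IsPartition l → l.sum = c * (c + 1) / 2 → ¬ HasHook l 2 →
      l = staircase c) ∧
    conjList (staircase c) = staircase c := by
  refine ⟨⟨isPartition_staircase c, sum_staircase c, not_hasHook_two_staircase c⟩,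
    fun l hl hsum hno => ?_, conjList_staircase c⟩
  have hstair := eq_staircase_length hl hno
  have hlen : l.length = c := strictMono_sum_staircase.injective <| by
    rw [← hstair, hsum, sum_staircase]
  rw [hstair, hlen]
end
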